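/- arXiv:1804.03062 — 2 statements merged into one kernel-verified Lean document; each statement's English description precedes it below -/
import Mathlib

section
/- Under the logistic models for Y given (X,W) and W given X, the marginal log-odds effect β(x) := d/dx log[P(Y=1|X=x)/P(Y=0|X=x)] satisfies the exact decomposition β(x) = βx·{1 − Δy(x)Δw(x)} + βxw·{P(W=1|Y=1,X=x) − Δw(x)·P(Y=1|W=1,X=x)} + γx·Δw(x), where Δy(x) = P(Y=1|W=1,X=x) − P(Y=1|W=0,X=x) and Δw(x) = P(W=1|Y=1,X=x) − P(W=1|Y=0,X=x). -/
/-!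
The marginal log-odds is `log P(Y=1|x) - log P(Y=0|x)`, and `P(Y=y|x) = Σ_w P(Y=y,W=w|x)`.
The derivative of the log of such a sum is the Bayes average, under `P(W=w|Y=y,x)`, of the
joint scores `d/dx log P(Y=y,W=w|x) = (y - P(Y=1|W=w,x))(βx + βxw w) + (w - P(W=1|x)) γx`.
Subtracting the two averages and using `P(W=0|Y=y,x) = 1 - P(W=1|Y=y,x)` leaves a polynomial
identity; the `W`-scores do not depend on `y`, so they contribute exactly `γx Δw(x)`.
-/

noncomputable def expit (t : ℝ) : ℝ := Real.exp t / (1 + Real.exp t)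

/-- `P(Y=1 | X=x, W=w)` under the logistic model. -/
noncomputable def pY (β0 βx βw βxw x w : ℝ) : ℝ := expit (β0 + βx * x + βw * w + βxw * x * w)

/-- `P(W=1 | X=x)` under the logistic model. -/
noncomputable def pW (γ0 γx x : ℝ) : ℝ := expit (γ0 + γx * x)

/-- joint conditional probability `P(Y=y, W=w | X=x)` induced by the two logistic models. -/
noncomputable def jnt (β0 βx βw βxw γ0 γx x : ℝ) (y w : Bool) : ℝ :=
  (if y then pY β0 βx βw βxw x (if w then 1 else 0)
   else 1 - pY β0 βx βw βxw x (if w then 1 else 0)) *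
  (if w then pW γ0 γx x else 1 - pW γ0 γx x)

/-- `P(W=w | Y=y, X=x)` obtained via Bayes' theorem. -/
noncomputable def pWgYX (β0 βx βw βxw γ0 γx x : ℝ) (y w : Bool) : ℝ :=
  jnt β0 βx βw βxw γ0 γx x y w /
    (jnt β0 βx βw βxw γ0 γx x y true + jnt β0 βx βw βxw γ0 γx x y false)

/-- marginal (over `W`) probability `P(Y=y | X=x)`. -/
noncomputable def pYgX (β0 βx βw βxw γ0 γx x : ℝ) (y : Bool) : ℝ :=
  jnt β0 βx βw βxw γ0 γx x y true + jnt β0 βx βw βxw γ0 γx x y false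

/-- `g_y(x)`, the conditional log odds of `W` given `Y=y, X=x`. -/
noncomputable def g (β0 βx βw βxw γ0 γx : ℝ) (y : Bool) (x : ℝ) : ℝ :=
  Real.log (pWgYX β0 βx βw βxw γ0 γx x y true / pWgYX β0 βx βw βxw γ0 γx x y false)

/-- the marginal log odds of `Y` given `X=x`. -/
noncomputable def margLogit (β0 βx βw βxw γ0 γx : ℝ) (x : ℝ) : ℝ :=
  Real.log (pYgX β0 βx βw βxw γ0 γx x true / pYgX β0 βx βw βxw γ0 γx x false)

/-- `β(x)`, the marginal log-odds effect of `X` on `Y`. -/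
noncomputable def betaMarg (β0 βx βw βxw γ0 γx : ℝ) (x : ℝ) : ℝ :=
  deriv (margLogit β0 βx βw βxw γ0 γx) x

open Real

theorem expit_eq_sigmoid : expit = sigmoid := by
  funext t
  rw [expit, sigmoid_def, exp_neg]
  field_simp
  ring

theorem hasDerivAt_expit_affine (a b x : ℝ) :
    HasDerivAt (fun t => expit (a + b * t))
      (expit (a + b * x) * (1 - expit (a + b * x)) * b) x := by
  rw [expit_eq_sigmoid]
  have hη : HasDerivAt (fun t => a + b * t) b x := by
    simpa using ((hasDerivAt_id x).const_mul b).const_add a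
  exact HasDerivAt.comp (h₂ := sigmoid) x (hasDerivAt_sigmoid _) hη

/-- The Bernoulli mass `p^b (1 - p)^(1 - b)` of a logistic parameter has the logistic score
`(b - p) d` as logarithmic derivative. -/
theorem hasDerivAt_bernoulli_mass {p : ℝ → ℝ} {d x : ℝ}
    (hp : HasDerivAt p (p x * (1 - p x) * d) x) (b : Bool) :
    HasDerivAt (fun t => if b then p t else 1 - p t)
      ((if b then p x else 1 - p x) * (((if b then 1 else 0) - p x) * d)) x := by
  cases b
  · simpa using (hp.const_sub 1).congr_deriv (by ring)
  · simpa using hp.congr_deriv (by ring)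

theorem HasDerivAt.add_of_logDeriv {f g : ℝ → ℝ} {a b x : ℝ}
    (hf : HasDerivAt f (f x * a) x) (hg : HasDerivAt g (g x * b) x) (hfg : f x + g x ≠ 0) :
    HasDerivAt (fun t => f t + g t)
      ((f x + g x) * (f x / (f x + g x) * a + g x / (f x + g x) * b)) x :=
  (hf.add hg).congr_deriv (by field_simp)

theorem HasDerivAt.log_div_of_logDeriv {f g : ℝ → ℝ} {a b x : ℝ}
    (hf : HasDerivAt f (f x * a) x) (hg : HasDerivAt g (g x * b) x) (hf0 : f x ≠ 0)
    (hg0 : g x ≠ 0) :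
    HasDerivAt (fun t => Real.log (f t / g t)) (a - b) x :=
  ((hf.div hg hg0).log (div_ne_zero hf0 hg0)).congr_deriv (by simp only [Pi.div_apply]; field_simp)

section LogisticModel

variable (β0 βx βw βxw γ0 γx : ℝ)

theorem hasDerivAt_pY (w x : ℝ) :
    HasDerivAt (fun t => pY β0 βx βw βxw t w)
      (pY β0 βx βw βxw x w * (1 - pY β0 βx βw βxw x w) * (βx + βxw * w)) x := by
  have hη (t : ℝ) :
      β0 + βx * t + βw * w + βxw * t * w = β0 + βw * w + (βx + βxw * w) * t := by
    ring
  simp only [pY, hη]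
  exact hasDerivAt_expit_affine _ _ x

theorem hasDerivAt_pW (x : ℝ) :
    HasDerivAt (fun t => pW γ0 γx t) (pW γ0 γx x * (1 - pW γ0 γx x) * γx) x :=
  hasDerivAt_expit_affine γ0 γx x

noncomputable def jntScore (x : ℝ) (y w : Bool) : ℝ :=
  ((if y then 1 else 0) - pY β0 βx βw βxw x (if w then 1 else 0)) *
      (βx + βxw * (if w then 1 else 0)) +
    ((if w then 1 else 0) - pW γ0 γx x) * γx

theorem jnt_pos (x : ℝ) (y w : Bool) : 0 < jnt β0 βx βw βxw γ0 γx x y w := by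
  have h01 (t : ℝ) : 0 < expit t ∧ 0 < 1 - expit t := by
    rw [expit_eq_sigmoid, sub_pos]
    exact ⟨sigmoid_pos t, sigmoid_lt_one t⟩
  unfold jnt pY pW
  cases y <;> cases w <;> simp [h01]

theorem hasDerivAt_jnt (x : ℝ) (y w : Bool) :
    HasDerivAt (fun t => jnt β0 βx βw βxw γ0 γx t y w)
      (jnt β0 βx βw βxw γ0 γx x y w * jntScore β0 βx βw βxw γ0 γx x y w) x :=
  ((hasDerivAt_bernoulli_mass (hasDerivAt_pY β0 βx βw βxw _ x) y).mul
    (hasDerivAt_bernoulli_mass (hasDerivAt_pW γ0 γx x) w)).congr_deriv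
      (by simp only [jnt, jntScore]; ring)

theorem pYgX_pos (x : ℝ) (y : Bool) : 0 < pYgX β0 βx βw βxw γ0 γx x y :=
  add_pos (jnt_pos _ _ _ _ _ _ x y true) (jnt_pos _ _ _ _ _ _ x y false)

theorem pWgYX_false_eq_one_sub (x : ℝ) (y : Bool) :
    pWgYX β0 βx βw βxw γ0 γx x y false = 1 - pWgYX β0 βx βw βxw γ0 γx x y true := by
  have h := (pYgX_pos β0 βx βw βxw γ0 γx x y).ne'
  unfold pYgX at h
  unfold pWgYX
  field_simp
  ring

noncomputable def condMeanScore (x : ℝ) (y : Bool) : ℝ :=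
  pWgYX β0 βx βw βxw γ0 γx x y true * jntScore β0 βx βw βxw γ0 γx x y true +
    pWgYX β0 βx βw βxw γ0 γx x y false * jntScore β0 βx βw βxw γ0 γx x y false

/-- The score of the marginal model is the conditional mean, given `Y = y`, of the joint score. -/
theorem hasDerivAt_pYgX (x : ℝ) (y : Bool) :
    HasDerivAt (fun t => pYgX β0 βx βw βxw γ0 γx t y)
      (pYgX β0 βx βw βxw γ0 γx x y * condMeanScore β0 βx βw βxw γ0 γx x y) x :=
  (hasDerivAt_jnt _ _ _ _ _ _ x y true).add_of_logDeriv (hasDerivAt_jnt _ _ _ _ _ _ x y false)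
    (pYgX_pos _ _ _ _ _ _ x y).ne'

theorem hasDerivAt_margLogit (x : ℝ) :
    HasDerivAt (margLogit β0 βx βw βxw γ0 γx)
      (condMeanScore β0 βx βw βxw γ0 γx x true -
        condMeanScore β0 βx βw βxw γ0 γx x false) x :=
  (hasDerivAt_pYgX _ _ _ _ _ _ x true).log_div_of_logDeriv (hasDerivAt_pYgX _ _ _ _ _ _ x false)
    (pYgX_pos _ _ _ _ _ _ x true).ne' (pYgX_pos _ _ _ _ _ _ x false).ne'

end LogisticModel

/-- The exact decomposition of the marginal log-odds effect (Equation (4) of the paper):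
`β(x) = βx{1 − Δy(x)Δw(x)} + βxw{P(W=1|Y=1,X=x) − Δw(x)P(Y=1|W=1,X=x)} + γx·Δw(x)`. -/
theorem marginal_effect_decomposition (β0 βx βw βxw γ0 γx : ℝ) (x : ℝ) :
    betaMarg β0 βx βw βxw γ0 γx x
      = βx * (1 - (pY β0 βx βw βxw x 1 - pY β0 βx βw βxw x 0) *
                  (pWgYX β0 βx βw βxw γ0 γx x true true - pWgYX β0 βx βw βxw γ0 γx x false true))
        + βxw * (pWgYX β0 βx βw βxw γ0 γx x true true -
                  (pWgYX β0 βx βw βxw γ0 γx x true true - pWgYX β0 βx βw βxw γ0 γx x false true) *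
                    pY β0 βx βw βxw x 1)
        + γx * (pWgYX β0 βx βw βxw γ0 γx x true true - pWgYX β0 βx βw βxw γ0 γx x false true) := by
  rw [betaMarg, (hasDerivAt_margLogit β0 βx βw βxw γ0 γx x).deriv, condMeanScore, condMeanScore,
    pWgYX_false_eq_one_sub, pWgYX_false_eq_one_sub]
  simp only [jntScore, if_true, Bool.false_eq_true, if_false]
  ring
end

section
/- For binary X, Y and two binary mediators W1, W2 generated by hierarchical logistic models, after marginalizing over the inner mediator W1 the conditional distribution of Y given (X, W2) is again logistic with coefficients β*_x = βx + βxw1 + log RR_{W1|Y,X=0,W2=0} − log RR_{W1|Y,X=1,W2=0}, β*_{w2} = βw2 + βw1w2 + log RR_{W1|Y,W2=0,X=0} − log RR_{W1|Y,W2=1,X=0}, and β*_{xw2} = βxw2 + (log RR_{W1|Y,W2=0,X=1} − log RR_{W1|Y,W2=1,X=1}) − (log RR_{W1|Y,W2=0,X=0} − log RR_{W1|Y,W2=1,X=0}). -/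
/-- `P(Y=1 | X=x, W1=w1, W2=w2)` under the hierarchical logistic model. -/
noncomputable def pY2 (β0 βx βw1 βxw1 βw2 βxw2 βw1w2 x w1 w2 : ℝ) : ℝ :=
  expit (β0 + βx * x + βw1 * w1 + βxw1 * x * w1 + βw2 * w2 + βxw2 * x * w2 + βw1w2 * w1 * w2)

/-- `P(W1=1 | X=x, W2=w2)` under the hierarchical logistic model. -/
noncomputable def pW1 (γ10 γ1x γ1w2 γ1xw2 x w2 : ℝ) : ℝ :=
  expit (γ10 + γ1x * x + γ1w2 * w2 + γ1xw2 * x * w2)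

/-- `P(W2=1 | X=x)` under the hierarchical logistic model. -/
noncomputable def pW2 (γ20 γ2x x : ℝ) : ℝ := expit (γ20 + γ2x * x)

/-- joint conditional probability `P(Y=y, W1=w1 | X=x, W2=w2)`. -/
noncomputable def jYW1 (β0 βx βw1 βxw1 βw2 βxw2 βw1w2 γ10 γ1x γ1w2 γ1xw2 x w2 : ℝ)
    (y w1 : Bool) : ℝ :=
  (if y then pY2 β0 βx βw1 βxw1 βw2 βxw2 βw1w2 x (if w1 then 1 else 0) w2
   else 1 - pY2 β0 βx βw1 βxw1 βw2 βxw2 βw1w2 x (if w1 then 1 else 0) w2) *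
  (if w1 then pW1 γ10 γ1x γ1w2 γ1xw2 x w2 else 1 - pW1 γ10 γ1x γ1w2 γ1xw2 x w2)

/-- marginal (over `W1`) log odds of `Y` given `X=x, W2=w2`. -/
noncomputable def Lgt (β0 βx βw1 βxw1 βw2 βxw2 βw1w2 γ10 γ1x γ1w2 γ1xw2 x w2 : ℝ) : ℝ :=
  Real.log ((jYW1 β0 βx βw1 βxw1 βw2 βxw2 βw1w2 γ10 γ1x γ1w2 γ1xw2 x w2 true true +
      jYW1 β0 βx βw1 βxw1 βw2 βxw2 βw1w2 γ10 γ1x γ1w2 γ1xw2 x w2 true false) /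
    (jYW1 β0 βx βw1 βxw1 βw2 βxw2 βw1w2 γ10 γ1x γ1w2 γ1xw2 x w2 false true +
      jYW1 β0 βx βw1 βxw1 βw2 βxw2 βw1w2 γ10 γ1x γ1w2 γ1xw2 x w2 false false))

/-- `log RR_{W1∣Y, X=x, W2=w2} = log [P(W1=1|Y=1,X=x,W2=w2) / P(W1=1|Y=0,X=x,W2=w2)]`. -/
noncomputable def logRRW1 (β0 βx βw1 βxw1 βw2 βxw2 βw1w2 γ10 γ1x γ1w2 γ1xw2 x w2 : ℝ) : ℝ :=
  Real.log ((jYW1 β0 βx βw1 βxw1 βw2 βxw2 βw1w2 γ10 γ1x γ1w2 γ1xw2 x w2 true true /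
      (jYW1 β0 βx βw1 βxw1 βw2 βxw2 βw1w2 γ10 γ1x γ1w2 γ1xw2 x w2 true true +
        jYW1 β0 βx βw1 βxw1 βw2 βxw2 βw1w2 γ10 γ1x γ1w2 γ1xw2 x w2 true false)) /
    (jYW1 β0 βx βw1 βxw1 βw2 βxw2 βw1w2 γ10 γ1x γ1w2 γ1xw2 x w2 false true /
      (jYW1 β0 βx βw1 βxw1 βw2 βxw2 βw1w2 γ10 γ1x γ1w2 γ1xw2 x w2 false true +
        jYW1 β0 βx βw1 βxw1 βw2 βxw2 βw1w2 γ10 γ1x γ1w2 γ1xw2 x w2 false false)))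

/-! Bayes' rule in odds form: the marginal odds of `Y` times the relative risk of `W1 = 1`
between `Y = 1` and `Y = 0` is the conditional odds of `Y` given `W1 = 1`, whose logarithm is the
linear predictor of `Y` at `w1 = 1`. Evaluating this identity at the four cells
`(x, w2) ∈ {0, 1}²` and taking differences gives the three coefficient formulas. -/

lemma expit_eq_sigmoid_s17 (t : ℝ) : expit t = Real.sigmoid t := by
  rw [expit, Real.sigmoid_def, Real.exp_neg]
  field_simp
  ring

lemma expit_pos (t : ℝ) : 0 < expit t :=
  expit_eq_sigmoid_s17 t ▸ Real.sigmoid_pos t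

lemma one_sub_expit_pos (t : ℝ) : 0 < 1 - expit t :=
  sub_pos.2 (expit_eq_sigmoid_s17 t ▸ Real.sigmoid_lt_one t)

lemma log_expit_div_one_sub_expit (t : ℝ) : Real.log (expit t / (1 - expit t)) = t := by
  have hdiv : expit t / (1 - expit t) = Real.exp t := by
    have h := Real.exp_pos t
    rw [expit]
    field_simp
    ring
  rw [hdiv, Real.log_exp]

lemma log_odds_add_log_relRisk {a b c d : ℝ} (ha : a ≠ 0) (hc : c ≠ 0) (hab : a + b ≠ 0)
    (hcd : c + d ≠ 0) :
    Real.log ((a + b) / (c + d)) + Real.log ((a / (a + b)) / (c / (c + d))) =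
      Real.log (a / c) := by
  rw [← Real.log_mul (by positivity) (by positivity)]
  congr 1
  field_simp

lemma jYW1_pos (β0 βx βw1 βxw1 βw2 βxw2 βw1w2 γ10 γ1x γ1w2 γ1xw2 x w2 : ℝ) (y w1 : Bool) :
    0 < jYW1 β0 βx βw1 βxw1 βw2 βxw2 βw1w2 γ10 γ1x γ1w2 γ1xw2 x w2 y w1 := by
  cases y <;> cases w1 <;>
    simp only [jYW1, if_true, Bool.false_eq_true, if_false, pY2, pW1] <;>
    apply mul_pos <;> simp only [expit_pos, one_sub_expit_pos]

lemma Lgt_add_logRRW1 (β0 βx βw1 βxw1 βw2 βxw2 βw1w2 γ10 γ1x γ1w2 γ1xw2 x w2 : ℝ) :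
    Lgt β0 βx βw1 βxw1 βw2 βxw2 βw1w2 γ10 γ1x γ1w2 γ1xw2 x w2 +
        logRRW1 β0 βx βw1 βxw1 βw2 βxw2 βw1w2 γ10 γ1x γ1w2 γ1xw2 x w2 =
      β0 + βx * x + βw1 + βxw1 * x + βw2 * w2 + βxw2 * x * w2 + βw1w2 * w2 := by
  have hj := jYW1_pos β0 βx βw1 βxw1 βw2 βxw2 βw1w2 γ10 γ1x γ1w2 γ1xw2 x w2
  rw [Lgt, logRRW1, log_odds_add_log_relRisk (hj _ _).ne' (hj _ _).ne'
    (add_pos (hj _ _) (hj _ _)).ne' (add_pos (hj _ _) (hj _ _)).ne']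
  have hq : pW1 γ10 γ1x γ1w2 γ1xw2 x w2 ≠ 0 := (expit_pos _).ne'
  simp only [jYW1, if_true, Bool.false_eq_true, if_false, mul_div_mul_right _ _ hq, pY2,
    log_expit_div_one_sub_expit]
  ring

/-- Marginalizing over the inner mediator `W1`: the conditional law of `Y` given `(X, W2)`
is saturated-logistic with coefficients `β*_x = Lgt(1,0) − Lgt(0,0)`,
`β*_{w2} = Lgt(0,1) − Lgt(0,0)` and `β*_{xw2} = (Lgt(1,1) − Lgt(0,1)) − (Lgt(1,0) − Lgt(0,0))`,
and these coefficients have the stated expressions in terms of log relative risks of `W1`. -/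
theorem inner_marginalization
    (β0 βx βw1 βxw1 βw2 βxw2 βw1w2 γ10 γ1x γ1w2 γ1xw2 : ℝ) :
    (Lgt β0 βx βw1 βxw1 βw2 βxw2 βw1w2 γ10 γ1x γ1w2 γ1xw2 1 0 -
        Lgt β0 βx βw1 βxw1 βw2 βxw2 βw1w2 γ10 γ1x γ1w2 γ1xw2 0 0
      = βx + βxw1
        + logRRW1 β0 βx βw1 βxw1 βw2 βxw2 βw1w2 γ10 γ1x γ1w2 γ1xw2 0 0
        - logRRW1 β0 βx βw1 βxw1 βw2 βxw2 βw1w2 γ10 γ1x γ1w2 γ1xw2 1 0) ∧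
    (Lgt β0 βx βw1 βxw1 βw2 βxw2 βw1w2 γ10 γ1x γ1w2 γ1xw2 0 1 -
        Lgt β0 βx βw1 βxw1 βw2 βxw2 βw1w2 γ10 γ1x γ1w2 γ1xw2 0 0
      = βw2 + βw1w2
        + logRRW1 β0 βx βw1 βxw1 βw2 βxw2 βw1w2 γ10 γ1x γ1w2 γ1xw2 0 0
        - logRRW1 β0 βx βw1 βxw1 βw2 βxw2 βw1w2 γ10 γ1x γ1w2 γ1xw2 0 1) ∧
    ((Lgt β0 βx βw1 βxw1 βw2 βxw2 βw1w2 γ10 γ1x γ1w2 γ1xw2 1 1 -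
        Lgt β0 βx βw1 βxw1 βw2 βxw2 βw1w2 γ10 γ1x γ1w2 γ1xw2 0 1) -
      (Lgt β0 βx βw1 βxw1 βw2 βxw2 βw1w2 γ10 γ1x γ1w2 γ1xw2 1 0 -
        Lgt β0 βx βw1 βxw1 βw2 βxw2 βw1w2 γ10 γ1x γ1w2 γ1xw2 0 0)
      = βxw2
        + (logRRW1 β0 βx βw1 βxw1 βw2 βxw2 βw1w2 γ10 γ1x γ1w2 γ1xw2 1 0
            - logRRW1 β0 βx βw1 βxw1 βw2 βxw2 βw1w2 γ10 γ1x γ1w2 γ1xw2 1 1)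
        - (logRRW1 β0 βx βw1 βxw1 βw2 βxw2 βw1w2 γ10 γ1x γ1w2 γ1xw2 0 0
            - logRRW1 β0 βx βw1 βxw1 βw2 βxw2 βw1w2 γ10 γ1x γ1w2 γ1xw2 0 1)) := by
  have h00 := Lgt_add_logRRW1 β0 βx βw1 βxw1 βw2 βxw2 βw1w2 γ10 γ1x γ1w2 γ1xw2 0 0
  have h10 := Lgt_add_logRRW1 β0 βx βw1 βxw1 βw2 βxw2 βw1w2 γ10 γ1x γ1w2 γ1xw2 1 0
  have h01 := Lgt_add_logRRW1 β0 βx βw1 βxw1 βw2 βxw2 βw1w2 γ10 γ1x γ1w2 γ1xw2 0 1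
  have h11 := Lgt_add_logRRW1 β0 βx βw1 βxw1 βw2 βxw2 βw1w2 γ10 γ1x γ1w2 γ1xw2 1 1
  refine ⟨by linarith, by linarith, by linarith⟩
end
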